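/- arXiv:2205.10457 — 4 statements merged into one kernel-verified Lean document; each statement's English description precedes it below -/
import Mathlib

section
/- Any minimizer f* of the restricted sensible robust risk R̃^s_rob satisfies R_std(f*) ≤ max over Bayes rules f of P̃ of R_std(f); i.e., every sensibly robust model has true standard risk no worse than the worst-case Bayes rule fitted on the restricted distribution. -/
open MeasureTheory Set
open scoped ENNReal

noncomputable def sensRisk {E : Type*} [MeasurableSpace E] [PseudoMetricSpace E] {K : ℕ}
    (μ : Measure (E × Fin K)) (ε : ℝ) (fB f : E → Fin K) : ℝ≥0∞ :=
  μ {p | (fB p.1 ≠ p.2 ∧ f p.1 ≠ p.2) ∨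
         (fB p.1 = p.2 ∧ ∃ z, dist z p.1 ≤ ε ∧ fB z = p.2 ∧ f z ≠ p.2)}

noncomputable def stdRisk {E : Type*} [MeasurableSpace E] {K : ℕ}
    (μ : Measure (E × Fin K)) (f : E → Fin K) : ℝ≥0∞ :=
  μ {p | f p.1 ≠ p.2}

/-
A minimiser `f*` of the sensible robust risk is itself a Bayes rule of `P̃`, so `R_std(f*)` is one
of the values in the supremum. Sensible risk dominates standard risk, so it suffices to find one
classifier whose sensible risk is at most the Bayes risk. Take a measurable argmax `m` of the
conditional probabilities `φ k x = P̃(Y = k | X = x)`: it is Bayes because its misclassified mass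
`∑_{k ≠ m x} φ k x` is pointwise minimal. Since `fB` is the a.e. unique argmax, `m = fB` a.e. on
the points whose `fB`-label has positive mass; overriding `m` by `fB` at all those points does not
change the standard risk, and then the adversarial part of the sensible risk only charges null
labels. The detour through `m` is needed because `fB` itself need not be Bayes: on labels of mass
zero `η` is unconstrained (it may even be non-integrable).
-/

theorem sum_erase_le_sum_erase_of_le {ι M : Type*} [DecidableEq ι] [AddCommMonoid M]
    [PartialOrder M] [IsOrderedAddMonoid M] {s : Finset ι} {f : ι → M} {i j : ι}
    (hi : i ∈ s) (hj : j ∈ s) (h : f j ≤ f i) :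
    ∑ k ∈ s.erase i, f k ≤ ∑ k ∈ s.erase j, f k := by
  rcases eq_or_ne i j with rfl | hij
  · rfl
  rw [← Finset.sum_erase_add _ _ (Finset.mem_erase.2 ⟨hij.symm, hj⟩),
    ← Finset.sum_erase_add (s.erase j) _ (Finset.mem_erase.2 ⟨hij, hi⟩), Finset.erase_right_comm]
  exact add_le_add_right h _

theorem exists_measurable_argmax {E ι : Type*} [MeasurableSpace E] [Fintype ι] [LinearOrder ι]
    [Nonempty ι] [MeasurableSpace ι] {f : ι → E → ℝ≥0∞} (hf : ∀ k, Measurable (f k)) :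
    ∃ m : E → ι, Measurable m ∧ ∀ x k, f k x ≤ f (m x) x := by
  classical
  let S x := Finset.univ.filter fun k => ∀ j, f j x ≤ f k x
  have hS x : (S x).Nonempty := by
    obtain ⟨k, -, hk⟩ := Finset.exists_max_image Finset.univ (f · x) Finset.univ_nonempty
    exact ⟨k, Finset.mem_filter.2 ⟨Finset.mem_univ k, fun j => hk j (Finset.mem_univ j)⟩⟩
  refine ⟨fun x => (S x).min' (hS x), measurable_to_countable' fun k => ?_,
    fun x => (Finset.mem_filter.1 ((S x).min'_mem (hS x))).2⟩
  simp only [preimage, mem_singleton_iff, Finset.min'_eq_iff, S, Finset.mem_filter,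
    Finset.mem_univ, true_and, measurableSet_setOfPred]
  have hmax j : Measurable fun x => ∀ i, f i x ≤ f j x :=
    Measurable.forall fun i => measurableSet_setOfPred.1 (measurableSet_le (hf i) (hf j))
  exact (hmax k).and (Measurable.forall fun j => (hmax j).imp measurable_const)

theorem eq_of_le_ofReal_of_strictMax {ι : Type*} {a : ι → ℝ≥0∞} {r : ι → ℝ} {b c : ι}
    (hle : ∀ k, a k ≤ ENNReal.ofReal (r k)) (hb : a b = ENNReal.ofReal (r b))
    (hr : ∀ k ≠ b, r k < r b) (hbc : a b ≤ a c) (hc : a c ≠ 0) : c = b := by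
  by_contra hcb
  have hrc : 0 < r c := ENNReal.ofReal_pos.1 (pos_iff_ne_zero.2 (ne_bot_of_le_ne_bot hc (hle c)))
  have := calc a c ≤ ENNReal.ofReal (r c) := hle c
    _ < ENNReal.ofReal (r b) := (ENNReal.ofReal_lt_ofReal_iff (hrc.trans (hr c hcb))).2 (hr c hcb)
    _ = a b := hb.symm
    _ ≤ a c := hbc
  exact lt_irrefl _ this

theorem MeasureTheory.Integrable.eq_withDensity_ofReal {E : Type*} [MeasurableSpace E]
    {ρ ν : Measure E} {f : E → ℝ} (hf : Integrable f ν)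
    (h : ∀ A, MeasurableSet A → ρ A = ENNReal.ofReal (∫ x in A, f x ∂ν)) :
    ρ = ν.withDensity fun x => ENNReal.ofReal (f x) := by
  let g := hf.aestronglyMeasurable.mk f
  have hfg : f =ᵐ[ν] g := hf.aestronglyMeasurable.ae_eq_mk
  have hg : Measurable g := hf.aestronglyMeasurable.stronglyMeasurable_mk.measurable
  have hP : MeasurableSet {x | 0 < g x} := measurableSet_lt measurable_const hg
  rw [withDensity_congr_ae (hfg.mono fun x hx => congrArg ENNReal.ofReal hx)]
  ext A hA
  have hρ B (hB : MeasurableSet B) : ρ B = ENNReal.ofReal (∫ x in B, g x ∂ν) := by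
    rw [h B hB, integral_congr_ae (ae_restrict_of_ae hfg)]
  rw [withDensity_apply _ hA, ← measure_inter_add_sdiff A hP, ← lintegral_inter_add_sdiff _ A hP,
    hρ _ (hA.inter hP), hρ _ (hA.diff hP), ofReal_integral_eq_lintegral_ofReal]
  · congr 1
    rw [ENNReal.ofReal_eq_zero.2 (setIntegral_nonpos (hA.diff hP) fun x hx => not_lt.1 hx.2),
      eq_comm, setLIntegral_eq_zero_iff (hA.diff hP) (by fun_prop)]
    exact ae_of_all _ fun x hx => ENNReal.ofReal_eq_zero.2 (not_lt.1 hx.2)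
  · exact (hf.congr hfg).integrableOn
  · exact (ae_restrict_iff' (hA.inter hP)).2 (ae_of_all _ fun x hx => hx.2.le)

section Risk

variable {E : Type*} [MeasurableSpace E] {K : ℕ} {μ : Measure (E × Fin K)}

theorem stdRisk_le_sensRisk [PseudoMetricSpace E] {ε : ℝ} (hε : 0 ≤ ε) (fB f : E → Fin K) :
    stdRisk μ f ≤ sensRisk μ ε fB f := by
  refine measure_mono fun p hp => ?_
  by_cases hfB : fB p.1 = p.2
  · exact Or.inr ⟨hfB, p.1, (dist_self p.1).trans_le hε, hfB, hp⟩
  · exact Or.inl ⟨hfB, hp⟩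

theorem sensRisk_le_stdRisk [PseudoMetricSpace E] {ε : ℝ} {fB f : E → Fin K}
    (h : ∀ z, μ (univ ×ˢ {fB z}) ≠ 0 → f z = fB z) : sensRisk μ ε fB f ≤ stdRisk μ f := by
  have hnull : μ (⋃ k ∈ {k | μ (univ ×ˢ {k}) = 0}, univ ×ˢ {k}) = 0 :=
    (measure_biUnion_null_iff (to_countable _)).2 fun k hk => hk
  refine (measure_mono fun p hp => ?_).trans
    ((measure_union_le {p | f p.1 ≠ p.2} _).trans_eq (by rw [hnull, add_zero]; rfl))
  rcases hp with ⟨-, hf⟩ | ⟨-, z, -, hz, hf⟩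
  · exact Or.inl hf
  · by_cases hk : μ (univ ×ˢ {p.2}) = 0
    · exact Or.inr (mem_biUnion (x := p.2) hk ⟨mem_univ _, rfl⟩)
    · exact absurd (h z (hz ▸ hk)) (hz ▸ hf)

theorem stdRisk_congr_ae {f g : E → Fin K} (h : ∀ᵐ x ∂(μ.map Prod.fst), f x = g x) :
    stdRisk μ f = stdRisk μ g := by
  refine measure_congr ?_
  filter_upwards [ae_of_ae_map measurable_fst.aemeasurable h] with p hp
  change (f p.1 ≠ p.2) = (g p.1 ≠ p.2)
  rw [hp]

end Risk

theorem sum_indicator_setOf_ne {E : Type*} {K : ℕ} (φ : Fin K → E → ℝ≥0∞) (f : E → Fin K)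
    (x : E) :
    ∑ k, {p : E × Fin K | f p.1 ≠ p.2}.indicator (fun p => φ p.2 p.1) (x, k) =
      ∑ k ∈ Finset.univ.erase (f x), φ k x := by
  classical
  simp only [Set.indicator_apply]
  rw [← Finset.filter_ne, Finset.sum_filter]
  rfl

/-- With `ν` the marginal of `μ`, `φ k x` is a measurable version of `P(Y = k | X = x)`. -/
structure IsLabelDensity {E : Type*} [MeasurableSpace E] {K : ℕ} (μ : Measure (E × Fin K))
    (ν : Measure E) (φ : Fin K → E → ℝ≥0∞) : Prop where
  measurable : ∀ k, Measurable (φ k)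
  measure_prod_singleton : ∀ k A, MeasurableSet A → μ (A ×ˢ {k}) = ∫⁻ x in A, φ k x ∂ν

namespace IsLabelDensity

variable {E : Type*} [MeasurableSpace E] {K : ℕ} {μ : Measure (E × Fin K)} {ν : Measure E}
  {φ : Fin K → E → ℝ≥0∞}

theorem measure_eq_lintegral (h : IsLabelDensity μ ν φ) {W : Set (E × Fin K)}
    (hW : MeasurableSet W) : μ W = ∫⁻ x, ∑ k, W.indicator (fun p => φ p.2 p.1) (x, k) ∂ν := by
  have hslice k : MeasurableSet ((·, k) ⁻¹' W : Set E) := measurable_prodMk_right hW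
  calc μ W = μ (⋃ k, ((·, k) ⁻¹' W) ×ˢ {k}) := by
        congr 1; ext ⟨x, k⟩; simp
    _ = ∑ k, ∫⁻ x in (·, k) ⁻¹' W, φ k x ∂ν := by
        rw [measure_iUnion _ fun k => (hslice k).prod (measurableSet_singleton k), tsum_fintype]
        · exact Finset.sum_congr rfl fun k _ => h.measure_prod_singleton k _ (hslice k)
        · intro k j hkj
          exact Set.disjoint_left.2 fun p hk hj => hkj (hk.2.symm.trans hj.2)
    _ = ∑ k, ∫⁻ x, ((·, k) ⁻¹' W).indicator (φ k) x ∂ν :=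
        Finset.sum_congr rfl fun k _ => (lintegral_indicator (hslice k) _).symm
    _ = ∫⁻ x, ∑ k, W.indicator (fun p => φ p.2 p.1) (x, k) ∂ν := by
        rw [← lintegral_finsetSum _ fun k _ => (h.measurable k).indicator (hslice k)]
        rfl

theorem lintegral_le_measure (h : IsLabelDensity μ ν φ) (W : Set (E × Fin K)) :
    ∫⁻ x, ∑ k, W.indicator (fun p => φ p.2 p.1) (x, k) ∂ν ≤ μ W := by
  rw [← measure_toMeasurable W, h.measure_eq_lintegral (measurableSet_toMeasurable μ W)]
  exact lintegral_mono fun x => Finset.sum_le_sum fun k _ =>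
    indicator_le_indicator_of_subset (subset_toMeasurable μ W) (fun _ => zero_le) _

theorem ae_eq_zero (h : IsLabelDensity μ ν φ) {k : Fin K} (hk : μ (univ ×ˢ {k}) = 0) :
    φ k =ᵐ[ν] 0 := by
  rwa [h.measure_prod_singleton k univ MeasurableSet.univ, setLIntegral_univ,
    lintegral_eq_zero_iff (h.measurable k)] at hk

theorem ae_exists_ne_zero (h : IsLabelDensity μ (μ.map Prod.fst) φ) :
    ∀ᵐ x ∂(μ.map Prod.fst), ∃ k, φ k x ≠ 0 := by
  have hA : MeasurableSet {x | ∀ k, φ k x = 0} :=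
    measurableSet_setOfPred.2 (Measurable.forall fun k =>
      measurableSet_setOfPred.1 (h.measurable k (measurableSet_singleton 0)))
  simp only [ae_iff, ne_eq, not_exists, not_not]
  rw [Measure.map_apply measurable_fst hA, h.measure_eq_lintegral (measurable_fst hA)]
  refine (lintegral_congr fun x => ?_).trans lintegral_zero
  exact Finset.sum_eq_zero fun k _ => indicator_apply_eq_zero.2 fun hx => hx k

theorem stdRisk_le_of_isMax (h : IsLabelDensity μ ν φ) {m : E → Fin K} (hm : Measurable m)
    (hmax : ∀ x k, φ k x ≤ φ (m x) x) (g : E → Fin K) : stdRisk μ m ≤ stdRisk μ g := by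
  classical
  have hW : MeasurableSet {p : E × Fin K | m p.1 ≠ p.2} :=
    (measurableSet_eq_fun (hm.comp measurable_fst) measurable_snd).compl
  calc stdRisk μ m = ∫⁻ x, ∑ k ∈ Finset.univ.erase (m x), φ k x ∂ν := by
        simp only [stdRisk, h.measure_eq_lintegral hW, sum_indicator_setOf_ne]
    _ ≤ ∫⁻ x, ∑ k ∈ Finset.univ.erase (g x), φ k x ∂ν := lintegral_mono fun x =>
        sum_erase_le_sum_erase_of_le (Finset.mem_univ _) (Finset.mem_univ _) (hmax x (g x))
    _ ≤ stdRisk μ g := by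
        simpa only [stdRisk, sum_indicator_setOf_ne] using h.lintegral_le_measure {p | g p.1 ≠ p.2}

end IsLabelDensity

theorem exists_isLabelDensity {E : Type*} [MeasurableSpace E] {K : ℕ} {μ : Measure (E × Fin K)}
    {ν : Measure E} {η : E → Fin K → ℝ}
    (hη : ∀ k A, MeasurableSet A → μ (A ×ˢ {k}) = ENNReal.ofReal (∫ x in A, η x k ∂ν)) :
    ∃ φ, IsLabelDensity μ ν φ ∧
      ∀ k, μ (univ ×ˢ {k}) ≠ 0 → φ k =ᵐ[ν] fun x => ENNReal.ofReal (η x k) := by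
  have (k : Fin K) : ∃ ψ : E → ℝ≥0∞, Measurable ψ ∧
      (∀ A, MeasurableSet A → μ (A ×ˢ {k}) = ∫⁻ x in A, ψ x ∂ν) ∧
      (μ (univ ×ˢ {k}) ≠ 0 → ψ =ᵐ[ν] fun x => ENNReal.ofReal (η x k)) := by
    by_cases hk : μ (univ ×ˢ {k}) = 0
    · refine ⟨0, measurable_const, fun A _ => ?_, fun h => absurd hk h⟩
      rw [Pi.zero_def, lintegral_zero]
      exact measure_mono_null (prod_mono (subset_univ A) subset_rfl) hk
    have hint : Integrable (fun x => η x k) ν := by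
      by_contra hni
      rw [hη k univ MeasurableSet.univ, setIntegral_univ, integral_undef hni,
        ENNReal.ofReal_zero] at hk
      exact hk rfl
    have hemb := measurableEmbedding_prod_mk_right (β := E) k
    have hρ := hint.eq_withDensity_ofReal (ρ := μ.comap (·, k))
      fun A hA => by rw [hemb.comap_apply, ← prod_singleton, hη k A hA]
    have hmk := hint.aestronglyMeasurable.ae_eq_mk
    refine ⟨fun x => ENNReal.ofReal (hint.aestronglyMeasurable.mk _ x),
      ENNReal.measurable_ofReal.comp hint.aestronglyMeasurable.stronglyMeasurable_mk.measurable,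
      fun A hA => ?_, fun _ => hmk.mono fun x hx => congrArg ENNReal.ofReal hx.symm⟩
    rw [prod_singleton, ← hemb.comap_apply, hρ, withDensity_apply _ hA]
    exact lintegral_congr_ae (ae_restrict_of_ae (hmk.mono fun x hx => congrArg ENNReal.ofReal hx))
  choose φ hφm hφ hφη using this
  exact ⟨φ, ⟨hφm, hφ⟩, hφη⟩

theorem IsLabelDensity.ae_eq_of_strictMax {E : Type*} [MeasurableSpace E] {K : ℕ}
    {μ : Measure (E × Fin K)} {φ : Fin K → E → ℝ≥0∞} {η : E → Fin K → ℝ} {b m : E → Fin K}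
    (h : IsLabelDensity μ (μ.map Prod.fst) φ)
    (hφη : ∀ k, μ (univ ×ˢ {k}) ≠ 0 → φ k =ᵐ[μ.map Prod.fst] fun x => ENNReal.ofReal (η x k))
    (hη : ∀ᵐ x ∂(μ.map Prod.fst), ∀ k, k ≠ b x → η x k < η x (b x))
    (hmax : ∀ x k, φ k x ≤ φ (m x) x) :
    ∀ᵐ x ∂(μ.map Prod.fst), μ (univ ×ˢ {b x}) ≠ 0 → m x = b x := by
  have hle : ∀ᵐ x ∂(μ.map Prod.fst), ∀ k, φ k x ≤ ENNReal.ofReal (η x k) ∧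
      (μ (univ ×ˢ {k}) ≠ 0 → φ k x = ENNReal.ofReal (η x k)) := by
    refine ae_all_iff.2 fun k => ?_
    by_cases hk : μ (univ ×ˢ {k}) = 0
    · filter_upwards [h.ae_eq_zero hk] with x hx
      exact ⟨hx ▸ zero_le, fun h => absurd hk h⟩
    · filter_upwards [hφη k hk] with x hx
      exact ⟨hx.le, fun _ => hx⟩
  filter_upwards [hle, hη, h.ae_exists_ne_zero] with x hx hstrict ⟨j, hj⟩ hb
  exact eq_of_le_ofReal_of_strictMax (fun k => (hx k).1) ((hx (b x)).2 hb) hstrict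
    (hmax x (b x)) (ne_bot_of_le_ne_bot hj (hmax x j))

theorem sensibly_robust_beats_worst_restricted_bayes_general
    {E : Type*} [MeasurableSpace E] [PseudoMetricSpace E] {K : ℕ}
    (μ : Measure (E × Fin K))
    (μt : Measure (E × Fin K)) [IsProbabilityMeasure μt] (ε : ℝ) (hε : 0 < ε)
    (η : E → Fin K → ℝ) (fB : E → Fin K)
    -- `η x k` is the conditional probability `P̃(Y = k | X = x)`:
    (hη : ∀ (k : Fin K) (A : Set E), MeasurableSet A →
      μt (A ×ˢ ({k} : Set (Fin K))) =
        ENNReal.ofReal (∫ x in A, η x k ∂(μt.map Prod.fst)))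
    -- `fB` is the Bayes classifier, the argmax of `η x`, a.e. uniquely:
    (hUnique : ∀ᵐ x ∂(μt.map Prod.fst), ∀ k : Fin K, k ≠ fB x → η x k < η x (fB x))
    (fstar : E → Fin K)
    -- `f*` is a minimizer of the restricted sensible robust risk:
    (hmin : ∀ g : E → Fin K, sensRisk μt ε fB fstar ≤ sensRisk μt ε fB g) :
    stdRisk μ fstar ≤
      ⨆ f : {f : E → Fin K // ∀ g : E → Fin K, stdRisk μt f ≤ stdRisk μt g},
        stdRisk μ f.1 := by
  classical
  have : Nonempty (Fin K) := (nonempty_of_isProbabilityMeasure μt).map Prod.snd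
  obtain ⟨φ, hφ, hφη⟩ := exists_isLabelDensity hη
  obtain ⟨m, hm, hmax⟩ := exists_measurable_argmax hφ.measurable
  -- `fB` where its label has positive mass (the sensible risk needs this at every point), else `m`
  let f₀ : E → Fin K := fun z => if μt (univ ×ˢ {fB z}) = 0 then m z else fB z
  have hf₀m : stdRisk μt f₀ = stdRisk μt m := stdRisk_congr_ae <|
    (hφ.ae_eq_of_strictMax hφη hUnique hmax).mono fun x hx => by
      by_cases hx0 : μt (univ ×ˢ {fB x}) = 0
      · exact if_pos hx0
      · exact (if_neg hx0).trans (hx hx0).symm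
  refine le_iSup_of_le ⟨fstar, fun g => ?_⟩ le_rfl
  calc stdRisk μt fstar ≤ sensRisk μt ε fB fstar := stdRisk_le_sensRisk hε.le fB fstar
    _ ≤ sensRisk μt ε fB f₀ := hmin f₀
    _ ≤ stdRisk μt f₀ := sensRisk_le_stdRisk fun z hz => if_neg hz
    _ = stdRisk μt m := hf₀m
    _ ≤ stdRisk μt g := hφ.stdRisk_le_of_isMax hm hmax g

/-- Corollary 1: every minimizer `f*` of the sensible robust risk under the restricted
distribution `μ̃` has true standard risk (under the full distribution `μ`) no larger
than the worst-case standard risk over the Bayes rules of `μ̃`. -/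
theorem sensibly_robust_beats_worst_restricted_bayes
    {E : Type*} [MeasurableSpace E] [PseudoMetricSpace E] {K : ℕ}
    (μ : Measure (E × Fin K)) [IsProbabilityMeasure μ]
    (μt : Measure (E × Fin K)) [IsProbabilityMeasure μt] (ε : ℝ) (hε : 0 < ε)
    (Xt : Set E)
    (hsupp : μt {p : E × Fin K | p.1 ∈ Xt} = 1)
    (η : E → Fin K → ℝ) (fB : E → Fin K)
    -- `η x k` is the conditional probability `P̃(Y = k | X = x)`:
    (hη : ∀ (k : Fin K) (A : Set E), MeasurableSet A →
      μt (A ×ˢ ({k} : Set (Fin K))) =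
        ENNReal.ofReal (∫ x in A, η x k ∂(μt.map Prod.fst)))
    -- `fB` is the Bayes classifier, the argmax of `η x`, a.e. uniquely:
    (hfB : ∀ (x : E) (k : Fin K), η x k ≤ η x (fB x))
    (hUnique : ∀ᵐ x ∂(μt.map Prod.fst), ∀ k : Fin K, k ≠ fB x → η x k < η x (fB x))
    (fstar : E → Fin K)
    -- `f*` is a minimizer of the restricted sensible robust risk:
    (hmin : ∀ g : E → Fin K, sensRisk μt ε fB fstar ≤ sensRisk μt ε fB g) :
    stdRisk μ fstar ≤
      ⨆ f : {f : E → Fin K // ∀ g : E → Fin K, stdRisk μt f ≤ stdRisk μt g},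
        stdRisk μ f.1 :=
  sensibly_robust_beats_worst_restricted_bayes_general μ μt ε hε η fB hη hUnique fstar hmin
end

section
/- In the two-dimensional uniform example with ε < 1/4, the classifier f_rob(x) = sign(x_1 − (1/2 − ε)) has adversarial robust risk (1−p)·4ε and standard risk (1−p)·2ε, and it minimizes the adversarial robust risk R_rob over all classifiers. -/
open MeasureTheory Set
open scoped ENNReal

noncomputable def uniformExampleMeasure (p : ℝ) : Measure ((ℝ × ℝ) × Bool) :=
  ENNReal.ofReal (1 - p) •
      Measure.map (fun x => (x, false))
        ((2 : ℝ≥0∞) • (volume.restrict (Set.Ioo (0:ℝ) (1/2) ×ˢ Set.Ioo (0:ℝ) 1))) +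
    ENNReal.ofReal p •
      Measure.map (fun x => (x, true))
        ((2 : ℝ≥0∞) • (volume.restrict (Set.Ioo (1/2:ℝ) 1 ×ˢ Set.Ioo (0:ℝ) 1)))

lemma aux_dist_pt (ε : ℝ) (hε : 0 ≤ ε) (x : ℝ × ℝ) (t : ℝ) (ht : |t| ≤ ε) :
    dist ((x.1 + t, x.2) : ℝ × ℝ) x ≤ ε := by
  rw [Prod.dist_eq]
  simp [Real.dist_eq, abs_of_nonneg, hε, ht]

lemma aux_exists_lt (ε c : ℝ) (hε : 0 < ε) (x : ℝ × ℝ) :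
    (∃ x' : ℝ × ℝ, dist x' x ≤ ε ∧ c < x'.1) ↔ c - ε < x.1 := by
  constructor
  · rintro ⟨x', hd, hc⟩
    rw [Prod.dist_eq] at hd
    have h1 : dist x'.1 x.1 ≤ ε := le_trans (le_max_left _ _) hd
    rw [Real.dist_eq, abs_le] at h1
    linarith [h1.1]
  · intro h
    exact ⟨(x.1 + ε, x.2), aux_dist_pt ε hε.le x ε (by rw [abs_of_nonneg hε.le]), by
      simpa using by linarith⟩

lemma aux_exists_le (ε c : ℝ) (hε : 0 < ε) (x : ℝ × ℝ) :
    (∃ x' : ℝ × ℝ, dist x' x ≤ ε ∧ ¬ c < x'.1) ↔ x.1 - ε ≤ c := by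
  constructor
  · rintro ⟨x', hd, hc⟩
    rw [Prod.dist_eq] at hd
    have h1 : dist x'.1 x.1 ≤ ε := le_trans (le_max_left _ _) hd
    rw [Real.dist_eq, abs_le] at h1
    push_neg at hc
    linarith [h1.2]
  · intro h
    refine ⟨(x.1 + (-ε), x.2), aux_dist_pt ε hε.le x (-ε) (by rw [abs_neg, abs_of_nonneg hε.le]), ?_⟩
    simp only [not_lt]
    linarith

lemma uem_eq (p : ℝ) (S : Set ((ℝ × ℝ) × Bool)) (hS : MeasurableSet S) :
    uniformExampleMeasure p S =
      ENNReal.ofReal (1 - p) *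
          (2 * volume (((fun x => (x, false)) ⁻¹' S) ∩ (Set.Ioo (0:ℝ) (1/2) ×ˢ Set.Ioo (0:ℝ) 1))) +
        ENNReal.ofReal p *
          (2 * volume (((fun x => (x, true)) ⁻¹' S) ∩ (Set.Ioo (1/2:ℝ) 1 ×ˢ Set.Ioo (0:ℝ) 1))) := by
  have hbox0 : MeasurableSet (Set.Ioo (0:ℝ) (1/2) ×ˢ Set.Ioo (0:ℝ) 1) :=
    measurableSet_Ioo.prod measurableSet_Ioo
  have hbox1 : MeasurableSet (Set.Ioo (1/2:ℝ) 1 ×ˢ Set.Ioo (0:ℝ) 1) :=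
    measurableSet_Ioo.prod measurableSet_Ioo
  have hm0 : Measurable (fun x : ℝ × ℝ => (x, false)) := measurable_id.prodMk measurable_const
  have hm1 : Measurable (fun x : ℝ × ℝ => (x, true)) := measurable_id.prodMk measurable_const
  unfold uniformExampleMeasure
  rw [Measure.add_apply, Measure.smul_apply, Measure.smul_apply,
    Measure.map_apply hm0 hS, Measure.map_apply hm1 hS,
    Measure.smul_apply, Measure.smul_apply,
    Measure.restrict_apply' hbox0, Measure.restrict_apply' hbox1]
  simp [smul_eq_mul]

lemma uem_ge (p : ℝ) (S : Set ((ℝ × ℝ) × Bool)) :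
    ENNReal.ofReal (1 - p) *
        (2 * volume (((fun x => (x, false)) ⁻¹' S) ∩ (Set.Ioo (0:ℝ) (1/2) ×ˢ Set.Ioo (0:ℝ) 1))) +
      ENNReal.ofReal p *
        (2 * volume (((fun x => (x, true)) ⁻¹' S) ∩ (Set.Ioo (1/2:ℝ) 1 ×ˢ Set.Ioo (0:ℝ) 1))) ≤
    uniformExampleMeasure p S := by
  have hbox0 : MeasurableSet (Set.Ioo (0:ℝ) (1/2) ×ˢ Set.Ioo (0:ℝ) 1) :=
    measurableSet_Ioo.prod measurableSet_Ioo
  have hbox1 : MeasurableSet (Set.Ioo (1/2:ℝ) 1 ×ˢ Set.Ioo (0:ℝ) 1) :=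
    measurableSet_Ioo.prod measurableSet_Ioo
  have hm0 : Measurable (fun x : ℝ × ℝ => (x, false)) := measurable_id.prodMk measurable_const
  have hm1 : Measurable (fun x : ℝ × ℝ => (x, true)) := measurable_id.prodMk measurable_const
  unfold uniformExampleMeasure
  rw [Measure.add_apply, Measure.smul_apply, Measure.smul_apply, smul_eq_mul, smul_eq_mul]
  have h0 : (2:ℝ≥0∞) * volume (((fun x => (x, false)) ⁻¹' S) ∩ (Set.Ioo (0:ℝ) (1/2) ×ˢ Set.Ioo (0:ℝ) 1)) ≤
      (Measure.map (fun x => (x, false)) ((2:ℝ≥0∞) • volume.restrict (Set.Ioo (0:ℝ) (1/2) ×ˢ Set.Ioo (0:ℝ) 1))) S := by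
    have := Measure.le_map_apply hm0.aemeasurable S (μ := (2:ℝ≥0∞) • volume.restrict (Set.Ioo (0:ℝ) (1/2) ×ˢ Set.Ioo (0:ℝ) 1))
    rwa [Measure.smul_apply, smul_eq_mul, Measure.restrict_apply' hbox0] at this
  have h1 : (2:ℝ≥0∞) * volume (((fun x => (x, true)) ⁻¹' S) ∩ (Set.Ioo (1/2:ℝ) 1 ×ˢ Set.Ioo (0:ℝ) 1)) ≤
      (Measure.map (fun x => (x, true)) ((2:ℝ≥0∞) • volume.restrict (Set.Ioo (1/2:ℝ) 1 ×ˢ Set.Ioo (0:ℝ) 1))) S := by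
    have := Measure.le_map_apply hm1.aemeasurable S (μ := (2:ℝ≥0∞) • volume.restrict (Set.Ioo (1/2:ℝ) 1 ×ˢ Set.Ioo (0:ℝ) 1))
    rwa [Measure.smul_apply, smul_eq_mul, Measure.restrict_apply' hbox1] at this
  gcongr

lemma vol_box (a b c d : ℝ) :
    volume (Set.Ioo a b ×ˢ Set.Ioo c d) = ENNReal.ofReal (b - a) * ENNReal.ofReal (d - c) := by
  rw [Measure.volume_eq_prod, Measure.prod_prod, Real.volume_Ioo, Real.volume_Ioo]

/-- In the two-dimensional uniform example with `ε < 1/4`, the classifier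
`f_rob(x) = sign(x₁ - (1/2 - ε))` has adversarial robust risk `(1-p)·4ε` and standard
risk `(1-p)·2ε`, and minimizes the adversarial robust risk over all classifiers. -/
theorem uniform_robust_classifier (p : ℝ) (hp : 1/2 < p) (hp1 : p ≤ 1)
    (ε : ℝ) (hε : 0 < ε) (hε4 : ε < 1/4) :
    uniformExampleMeasure p
        {z : (ℝ × ℝ) × Bool |
          ∃ x' : ℝ × ℝ, dist x' z.1 ≤ ε ∧ decide (1/2 - ε < x'.1) ≠ z.2}
      = ENNReal.ofReal ((1 - p) * (4 * ε)) ∧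
    uniformExampleMeasure p {z : (ℝ × ℝ) × Bool | decide (1/2 - ε < z.1.1) ≠ z.2}
      = ENNReal.ofReal ((1 - p) * (2 * ε)) ∧
    ∀ f : ℝ × ℝ → Bool,
      uniformExampleMeasure p
          {z : (ℝ × ℝ) × Bool |
            ∃ x' : ℝ × ℝ, dist x' z.1 ≤ ε ∧ decide (1/2 - ε < x'.1) ≠ z.2} ≤
        uniformExampleMeasure p
          {z : (ℝ × ℝ) × Bool | ∃ x' : ℝ × ℝ, dist x' z.1 ≤ ε ∧ f x' ≠ z.2} := by
  have hp0 : (0:ℝ) ≤ 1 - p := by linarith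
  set S1 : Set ((ℝ × ℝ) × Bool) :=
    {z | ∃ x' : ℝ × ℝ, dist x' z.1 ≤ ε ∧ decide (1/2 - ε < x'.1) ≠ z.2} with hS1def
  have hfalse : ∀ x : ℝ × ℝ,
      (∃ x' : ℝ × ℝ, dist x' x ≤ ε ∧ decide (1/2 - ε < x'.1) ≠ false) ↔ 1/2 - 2*ε < x.1 := by
    intro x
    have h := aux_exists_lt ε (1/2 - ε) hε x
    rw [show (1/2 - 2*ε : ℝ) = 1/2 - ε - ε by ring, ← h]
    simp
  have htrue : ∀ x : ℝ × ℝ,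
      (∃ x' : ℝ × ℝ, dist x' x ≤ ε ∧ decide (1/2 - ε < x'.1) ≠ true) ↔ x.1 ≤ 1/2 := by
    intro x
    have h := aux_exists_le ε (1/2 - ε) hε x
    constructor
    · intro hx
      have := h.mp (by simpa using hx)
      linarith
    · intro hx
      have := h.mpr (by linarith)
      simpa using this
  have hmS1 : MeasurableSet S1 := by
    have : S1 = {x : ℝ × ℝ | 1/2 - 2*ε < x.1} ×ˢ ({false} : Set Bool) ∪
        {x : ℝ × ℝ | x.1 ≤ 1/2} ×ˢ ({true} : Set Bool) := by
      ext ⟨x, b⟩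
      cases b
      · simp only [hS1def, Set.mem_setOf_eq, Set.mem_union, Set.mem_prod, Set.mem_singleton_iff]
        rw [hfalse x]
        simp
      · simp only [hS1def, Set.mem_setOf_eq, Set.mem_union, Set.mem_prod, Set.mem_singleton_iff]
        rw [htrue x]
        simp
    rw [this]
    exact ((measurableSet_lt measurable_const measurable_fst).prod
        (measurableSet_singleton _)).union
      ((measurableSet_le measurable_fst measurable_const).prod (measurableSet_singleton _))
  have hA0 : ((fun x : ℝ × ℝ => (x, false)) ⁻¹' S1) ∩ (Set.Ioo (0:ℝ) (1/2) ×ˢ Set.Ioo (0:ℝ) 1)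
      = Set.Ioo (1/2 - 2*ε) (1/2) ×ˢ Set.Ioo (0:ℝ) 1 := by
    ext x
    simp only [Set.mem_inter_iff, Set.mem_preimage, hS1def, Set.mem_setOf_eq, Set.mem_prod,
      Set.mem_Ioo]
    rw [hfalse x]
    constructor
    · rintro ⟨h1, ⟨h2, h3⟩, h4⟩
      exact ⟨⟨h1, h3⟩, h4⟩
    · rintro ⟨⟨h1, h2⟩, h3⟩
      exact ⟨h1, ⟨by linarith, h2⟩, h3⟩
  have hA1 : ((fun x : ℝ × ℝ => (x, true)) ⁻¹' S1) ∩ (Set.Ioo (1/2:ℝ) 1 ×ˢ Set.Ioo (0:ℝ) 1)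
      = (∅ : Set (ℝ × ℝ)) := by
    rw [Set.eq_empty_iff_forall_notMem]
    intro x hx
    simp only [Set.mem_inter_iff, Set.mem_preimage, hS1def, Set.mem_setOf_eq, Set.mem_prod,
      Set.mem_Ioo] at hx
    rw [htrue x] at hx
    linarith [hx.1, hx.2.1.1]
  have h4 : ENNReal.ofReal ((1 - p) * (4 * ε))
      = ENNReal.ofReal (1 - p) * (2 * ENNReal.ofReal (2*ε)) := by
    rw [ENNReal.ofReal_mul hp0]
    congr 1
    rw [show ((4:ℝ)*ε) = 2*(2*ε) by ring,
      ENNReal.ofReal_mul (by norm_num : (0:ℝ) ≤ 2), ENNReal.ofReal_ofNat]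
  have part1 : uniformExampleMeasure p S1 = ENNReal.ofReal ((1 - p) * (4 * ε)) := by
    rw [uem_eq p S1 hmS1, hA0, hA1, vol_box]
    simp only [measure_empty, mul_zero, add_zero]
    rw [show (1/2 - (1/2 - 2*ε) : ℝ) = 2*ε by ring, show ((1:ℝ) - 0) = 1 by ring,
      ENNReal.ofReal_one, mul_one, h4]
  refine ⟨part1, ?_, ?_⟩
  · -- standard risk
    set S2 : Set ((ℝ × ℝ) × Bool) := {z | decide (1/2 - ε < z.1.1) ≠ z.2} with hS2def
    have hmS2 : MeasurableSet S2 := by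
      have : S2 = {x : ℝ × ℝ | 1/2 - ε < x.1} ×ˢ ({false} : Set Bool) ∪
          {x : ℝ × ℝ | x.1 ≤ 1/2 - ε} ×ˢ ({true} : Set Bool) := by
        ext ⟨x, b⟩
        cases b <;> simp [hS2def]
      rw [this]
      exact ((measurableSet_lt measurable_const measurable_fst).prod
          (measurableSet_singleton _)).union
        ((measurableSet_le measurable_fst measurable_const).prod (measurableSet_singleton _))
    have hB0 : ((fun x : ℝ × ℝ => (x, false)) ⁻¹' S2) ∩ (Set.Ioo (0:ℝ) (1/2) ×ˢ Set.Ioo (0:ℝ) 1)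
        = Set.Ioo (1/2 - ε) (1/2) ×ˢ Set.Ioo (0:ℝ) 1 := by
      ext x
      simp only [Set.mem_inter_iff, Set.mem_preimage, hS2def, Set.mem_setOf_eq, Set.mem_prod,
        Set.mem_Ioo, ne_eq, decide_eq_false_iff_not, not_not]
      constructor
      · rintro ⟨h1, ⟨h2, h3⟩, h4⟩
        exact ⟨⟨h1, h3⟩, h4⟩
      · rintro ⟨⟨h1, h2⟩, h3⟩
        exact ⟨h1, ⟨by linarith, h2⟩, h3⟩
    have hB1 : ((fun x : ℝ × ℝ => (x, true)) ⁻¹' S2) ∩ (Set.Ioo (1/2:ℝ) 1 ×ˢ Set.Ioo (0:ℝ) 1)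
        = (∅ : Set (ℝ × ℝ)) := by
      rw [Set.eq_empty_iff_forall_notMem]
      intro x hx
      simp only [Set.mem_inter_iff, Set.mem_preimage, hS2def, Set.mem_setOf_eq, Set.mem_prod,
        Set.mem_Ioo, ne_eq, decide_eq_true_eq] at hx
      have := hx.1
      have h2 := hx.2.1.1
      push_neg at this
      linarith
    have h2 : ENNReal.ofReal ((1 - p) * (2 * ε))
        = ENNReal.ofReal (1 - p) * (2 * ENNReal.ofReal ε) := by
      rw [ENNReal.ofReal_mul hp0]
      congr 1
      rw [ENNReal.ofReal_mul (by norm_num : (0:ℝ) ≤ 2), ENNReal.ofReal_ofNat]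
    rw [uem_eq p S2 hmS2, hB0, hB1, vol_box]
    simp only [measure_empty, mul_zero, add_zero]
    rw [show (1/2 - (1/2 - ε) : ℝ) = ε by ring, show ((1:ℝ) - 0) = 1 by ring,
      ENNReal.ofReal_one, mul_one, h2]
  · -- optimality
    intro f
    rw [part1]
    set Sf : Set ((ℝ × ℝ) × Bool) :=
      {z | ∃ x' : ℝ × ℝ, dist x' z.1 ≤ ε ∧ f x' ≠ z.2} with hSfdef
    set B0 := ((fun x : ℝ × ℝ => (x, false)) ⁻¹' Sf) ∩ (Set.Ioo (0:ℝ) (1/2) ×ˢ Set.Ioo (0:ℝ) 1)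
      with hB0def
    set B1 := ((fun x : ℝ × ℝ => (x, true)) ⁻¹' Sf) ∩ (Set.Ioo (1/2:ℝ) 1 ×ˢ Set.Ioo (0:ℝ) 1)
      with hB1def
    have hsub : Set.Ioo (1/2 - 2*ε) (1/2) ×ˢ Set.Ioo (0:ℝ) 1 ⊆
        B0 ∪ ((fun h => h + ((2*ε, 0) : ℝ × ℝ)) ⁻¹' B1) := by
      rintro ⟨x1, x2⟩ ⟨hx1, hx2⟩
      simp only [Set.mem_Ioo] at hx1 hx2
      by_cases hf : f (x1 + ε, x2) = true
      · left
        refine ⟨⟨(x1 + ε, x2), ?_, by simp [hf]⟩, ⟨by constructor <;> linarith, hx2⟩⟩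
        exact aux_dist_pt ε hε.le (x1, x2) ε (by rw [abs_of_nonneg hε.le])
      · right
        simp only [Set.mem_preimage, Prod.mk_add_mk, hB1def, Set.mem_inter_iff, hSfdef,
          Set.mem_setOf_eq, Set.mem_prod, Set.mem_Ioo]
        refine ⟨⟨(x1 + ε, x2), ?_, by simp [hf]⟩, ⟨by constructor <;> linarith, ?_⟩⟩
        · have : ((x1 + ε, x2) : ℝ × ℝ) = ((x1 + 2*ε) + (-ε), x2 + 0) := by
            ext <;> simp <;> ring
          rw [this]
          exact aux_dist_pt ε hε.le (x1 + 2*ε, x2 + 0) (-ε)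
            (by rw [abs_neg, abs_of_nonneg hε.le])
        · constructor <;> simp <;> linarith
    have key : ENNReal.ofReal (2*ε) ≤ volume B0 + volume B1 := by
      calc ENNReal.ofReal (2*ε)
          = volume (Set.Ioo (1/2 - 2*ε) (1/2) ×ˢ Set.Ioo (0:ℝ) 1) := by
            rw [vol_box, show (1/2 - (1/2 - 2*ε) : ℝ) = 2*ε by ring,
              show ((1:ℝ) - 0) = 1 by ring, ENNReal.ofReal_one, mul_one]
        _ ≤ volume (B0 ∪ ((fun h => h + ((2*ε, 0) : ℝ × ℝ)) ⁻¹' B1)) := measure_mono hsub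
        _ ≤ volume B0 + volume ((fun h => h + ((2*ε, 0) : ℝ × ℝ)) ⁻¹' B1) := measure_union_le _ _
        _ = volume B0 + volume B1 := by rw [measure_preimage_add_right]
    calc ENNReal.ofReal ((1 - p) * (4 * ε))
        = ENNReal.ofReal (1 - p) * (2 * ENNReal.ofReal (2*ε)) := h4
      _ ≤ ENNReal.ofReal (1 - p) * (2 * (volume B0 + volume B1)) := by gcongr
      _ = ENNReal.ofReal (1 - p) * (2 * volume B0) +
            ENNReal.ofReal (1 - p) * (2 * volume B1) := by ring
      _ ≤ ENNReal.ofReal (1 - p) * (2 * volume B0) +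
            ENNReal.ofReal p * (2 * volume B1) := by
          gcongr
          linarith
      _ ≤ uniformExampleMeasure p Sf := uem_ge p Sf
end

section
/- In the two-dimensional uniform example with ε < 1/4, the excess adversarial risk of the Bayes classifier over the robust-optimal classifier satisfies R_rob(f^B) − R_rob(f_rob) = ε(4p − 2), and the excess standard risk of the robust classifier satisfies R_std(f_rob) − R_std(f^B) = 2(1−p)ε. -/
open MeasureTheory Set
open scoped ENNReal

lemma uniformExampleMeasure_apply (p : ℝ) (s₀ s₁ : Set (ℝ × ℝ))
    (hs₀ : MeasurableSet s₀) (hs₁ : MeasurableSet s₁) :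
    uniformExampleMeasure p (s₀ ×ˢ ({false} : Set Bool) ∪ s₁ ×ˢ ({true} : Set Bool)) =
      ENNReal.ofReal (1 - p) *
          (2 * volume (s₀ ∩ Set.Ioo (0:ℝ) (1/2) ×ˢ Set.Ioo (0:ℝ) 1)) +
        ENNReal.ofReal p * (2 * volume (s₁ ∩ Set.Ioo (1/2:ℝ) 1 ×ˢ Set.Ioo (0:ℝ) 1)) := by
  have hmS : MeasurableSet (s₀ ×ˢ ({false} : Set Bool) ∪ s₁ ×ˢ ({true} : Set Bool)) :=
    (hs₀.prod (measurableSet_singleton _)).union (hs₁.prod (measurableSet_singleton _))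
  have hf : Measurable (fun x : ℝ × ℝ => (x, false)) := measurable_id.prodMk measurable_const
  have ht : Measurable (fun x : ℝ × ℝ => (x, true)) := measurable_id.prodMk measurable_const
  have hpre0 : (fun x : ℝ × ℝ => (x, false)) ⁻¹'
      (s₀ ×ˢ ({false} : Set Bool) ∪ s₁ ×ˢ ({true} : Set Bool)) = s₀ := by
    ext x; simp
  have hpre1 : (fun x : ℝ × ℝ => (x, true)) ⁻¹'
      (s₀ ×ˢ ({false} : Set Bool) ∪ s₁ ×ˢ ({true} : Set Bool)) = s₁ := by
    ext x; simp
  unfold uniformExampleMeasure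
  rw [Measure.add_apply, Measure.smul_apply, Measure.smul_apply,
    Measure.map_apply hf hmS, Measure.map_apply ht hmS, hpre0, hpre1,
    Measure.smul_apply, Measure.smul_apply,
    Measure.restrict_apply hs₀, Measure.restrict_apply hs₁]
  simp [smul_eq_mul]

lemma halfplane_meas (p a b : ℝ) (ha0 : 0 ≤ a) (ha : a ≤ 1/2) (hb : b < 1) :
    uniformExampleMeasure p
        ({x : ℝ × ℝ | a < x.1} ×ˢ ({false} : Set Bool) ∪
          {x : ℝ × ℝ | x.1 ≤ b} ×ˢ ({true} : Set Bool)) =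
      ENNReal.ofReal (1 - p) * (2 * ENNReal.ofReal (1/2 - a)) +
        ENNReal.ofReal p * (2 * ENNReal.ofReal (b - 1/2)) := by
  have hs₀ : MeasurableSet {x : ℝ × ℝ | a < x.1} :=
    measurableSet_lt measurable_const measurable_fst
  have hs₁ : MeasurableSet {x : ℝ × ℝ | x.1 ≤ b} :=
    measurableSet_le measurable_fst measurable_const
  rw [uniformExampleMeasure_apply p _ _ hs₀ hs₁]
  have h0 : {x : ℝ × ℝ | a < x.1} ∩ Set.Ioo (0:ℝ) (1/2) ×ˢ Set.Ioo (0:ℝ) 1 =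
      Set.Ioo a (1/2) ×ˢ Set.Ioo (0:ℝ) 1 := by
    ext x
    simp only [mem_inter_iff, mem_setOf_eq, mem_prod, mem_Ioo]
    constructor
    · rintro ⟨h1, ⟨⟨h2, h3⟩, h4⟩⟩
      exact ⟨⟨h1, h3⟩, h4⟩
    · rintro ⟨⟨h1, h2⟩, h3⟩
      exact ⟨h1, ⟨⟨by linarith, h2⟩, h3⟩⟩
  have h1 : {x : ℝ × ℝ | x.1 ≤ b} ∩ Set.Ioo (1/2:ℝ) 1 ×ˢ Set.Ioo (0:ℝ) 1 =
      Set.Ioc (1/2:ℝ) b ×ˢ Set.Ioo (0:ℝ) 1 := by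
    ext x
    simp only [mem_inter_iff, mem_setOf_eq, mem_prod, mem_Ioo, mem_Ioc]
    constructor
    · rintro ⟨h1, ⟨⟨h2, h3⟩, h4⟩⟩
      exact ⟨⟨h2, h1⟩, h4⟩
    · rintro ⟨⟨h1, h2⟩, h3⟩
      exact ⟨h2, ⟨⟨h1, by linarith⟩, h3⟩⟩
  rw [h0, h1, Measure.volume_eq_prod, Measure.prod_prod, Measure.prod_prod,
    Real.volume_Ioo, Real.volume_Ioo, Real.volume_Ioc]
  norm_num

lemma exists_lt_iff (c ε : ℝ) (hε : 0 < ε) (x : ℝ × ℝ) :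
    (∃ x' : ℝ × ℝ, dist x' x ≤ ε ∧ c < x'.1) ↔ c - ε < x.1 := by
  constructor
  · rintro ⟨x', hd, hc⟩
    rw [Prod.dist_eq] at hd
    have h1 := (le_max_left (dist x'.1 x.1) (dist x'.2 x.2)).trans hd
    rw [Real.dist_eq, abs_le] at h1
    linarith [h1.2]
  · intro h
    refine ⟨(x.1 + ε, x.2), ?_, ?_⟩
    · rw [Prod.dist_eq]
      have e1 : dist (x.1 + ε) x.1 = ε := by
        rw [Real.dist_eq, add_sub_cancel_left, abs_of_nonneg hε.le]
      show max (dist (x.1 + ε) x.1) (dist x.2 x.2) ≤ ε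
      rw [e1, dist_self]
      exact max_le le_rfl hε.le
    · show c < x.1 + ε
      linarith

lemma exists_le_iff (c ε : ℝ) (hε : 0 < ε) (x : ℝ × ℝ) :
    (∃ x' : ℝ × ℝ, dist x' x ≤ ε ∧ x'.1 ≤ c) ↔ x.1 ≤ c + ε := by
  constructor
  · rintro ⟨x', hd, hc⟩
    rw [Prod.dist_eq] at hd
    have h1 := (le_max_left (dist x'.1 x.1) (dist x'.2 x.2)).trans hd
    rw [Real.dist_eq, abs_le] at h1
    linarith [h1.1]
  · intro h
    refine ⟨(x.1 - ε, x.2), ?_, ?_⟩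
    · rw [Prod.dist_eq]
      have e1 : dist (x.1 - ε) x.1 = ε := by
        rw [Real.dist_eq, show x.1 - ε - x.1 = -ε by ring, abs_neg, abs_of_nonneg hε.le]
      show max (dist (x.1 - ε) x.1) (dist x.2 x.2) ≤ ε
      rw [e1, dist_self]
      exact max_le le_rfl hε.le
    · show x.1 - ε ≤ c
      linarith

lemma adv_set_eq (c ε : ℝ) (hε : 0 < ε) :
    {z : (ℝ × ℝ) × Bool | ∃ x' : ℝ × ℝ, dist x' z.1 ≤ ε ∧ decide (c < x'.1) ≠ z.2} =
      {x : ℝ × ℝ | c - ε < x.1} ×ˢ ({false} : Set Bool) ∪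
        {x : ℝ × ℝ | x.1 ≤ c + ε} ×ˢ ({true} : Set Bool) := by
  ext ⟨x, b⟩
  cases b
  · simpa using exists_lt_iff c ε hε x
  · simpa [not_lt] using exists_le_iff c ε hε x

lemma std_set_eq (c : ℝ) :
    {z : (ℝ × ℝ) × Bool | decide (c < z.1.1) ≠ z.2} =
      {x : ℝ × ℝ | c < x.1} ×ˢ ({false} : Set Bool) ∪
        {x : ℝ × ℝ | x.1 ≤ c} ×ˢ ({true} : Set Bool) := by
  ext ⟨x, b⟩
  cases b <;> simp [not_lt]

/-- In the two-dimensional uniform example with `ε < 1/4`: the excess adversarial risk of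
the Bayes classifier `f^B(x) = sign(x₁ - 1/2)` over the robust-optimal classifier
`f_rob(x) = sign(x₁ - (1/2 - ε))` is `ε(4p - 2)`, and the excess standard risk of
`f_rob` over `f^B` is `2(1-p)ε`. -/
theorem uniform_tradeoff (p : ℝ) (hp : 1/2 < p) (hp1 : p ≤ 1)
    (ε : ℝ) (hε : 0 < ε) (hε4 : ε < 1/4) :
    (uniformExampleMeasure p
        {z : (ℝ × ℝ) × Bool |
          ∃ x' : ℝ × ℝ, dist x' z.1 ≤ ε ∧ decide (1/2 < x'.1) ≠ z.2}).toReal -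
      (uniformExampleMeasure p
        {z : (ℝ × ℝ) × Bool |
          ∃ x' : ℝ × ℝ, dist x' z.1 ≤ ε ∧ decide (1/2 - ε < x'.1) ≠ z.2}).toReal
      = ε * (4 * p - 2) ∧
    (uniformExampleMeasure p
        {z : (ℝ × ℝ) × Bool | decide (1/2 - ε < z.1.1) ≠ z.2}).toReal -
      (uniformExampleMeasure p
        {z : (ℝ × ℝ) × Bool | decide (1/2 < z.1.1) ≠ z.2}).toReal
      = 2 * (1 - p) * ε := by
  have hp0 : (0:ℝ) ≤ 1 - p := by linarith
  have hpp : (0:ℝ) ≤ p := by linarith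
  have key : ∀ a b : ℝ, 0 ≤ a → a ≤ 1/2 → b < 1 →
      uniformExampleMeasure p
          ({x : ℝ × ℝ | a < x.1} ×ˢ ({false} : Set Bool) ∪
            {x : ℝ × ℝ | x.1 ≤ b} ×ˢ ({true} : Set Bool)) =
        ENNReal.ofReal ((1 - p) * (2 * (1/2 - a)) + p * (2 * max (b - 1/2) 0)) := by
    intro a b ha0 ha hb
    rw [halfplane_meas p a b ha0 ha hb]
    rw [ENNReal.ofReal_add (mul_nonneg hp0 (by linarith))
      (mul_nonneg hpp (mul_nonneg (by norm_num) (le_max_right _ _)))]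
    congr 1
    · rw [ENNReal.ofReal_mul hp0, ENNReal.ofReal_mul (by norm_num : (0:ℝ) ≤ 2)]
      norm_num
    · rw [ENNReal.ofReal_mul hpp, ENNReal.ofReal_mul (by norm_num : (0:ℝ) ≤ 2)]
      rw [show ENNReal.ofReal (b - 1/2) = ENNReal.ofReal (max (b - 1/2) 0) by
        rcases le_total (b - 1/2) 0 with h | h
        · rw [max_eq_right h, ENNReal.ofReal_zero, ENNReal.ofReal_eq_zero]
          exact h
        · rw [max_eq_left h]]
      norm_num
  have nn : ∀ a b : ℝ, a ≤ 1/2 →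
      (0:ℝ) ≤ (1 - p) * (2 * (1/2 - a)) + p * (2 * max (b - 1/2) 0) := fun a b ha =>
    add_nonneg (mul_nonneg hp0 (by linarith))
      (mul_nonneg hpp (mul_nonneg (by norm_num) (le_max_right _ _)))
  rw [adv_set_eq (1/2) ε hε, adv_set_eq (1/2 - ε) ε hε, std_set_eq, std_set_eq]
  rw [key (1/2 - ε) (1/2 + ε) (by linarith) (by linarith) (by linarith),
    key (1/2 - ε - ε) (1/2 - ε + ε) (by linarith) (by linarith) (by linarith),
    key (1/2 - ε) (1/2 - ε) (by linarith) (by linarith) (by linarith),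
    key (1/2) (1/2) (by linarith) (by linarith) (by linarith)]
  rw [ENNReal.toReal_ofReal (nn _ _ (by linarith)), ENNReal.toReal_ofReal (nn _ _ (by linarith)),
    ENNReal.toReal_ofReal (nn _ _ (by linarith)), ENNReal.toReal_ofReal (nn _ _ (by linarith))]
  constructor
  · rw [show max (1/2 + ε - 1/2) 0 = ε by rw [max_eq_left (by linarith)]; ring,
      show max (1/2 - ε + ε - 1/2) 0 = 0 by rw [max_eq_right (by linarith)]]
    ring
  · rw [show max (1/2 - ε - 1/2 : ℝ) 0 = 0 by rw [max_eq_right (by linarith)],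
      show max (1/2 - 1/2 : ℝ) 0 = 0 by norm_num]
    ring
end

section
/- In Example 2 (the nine-squares support), the worst-case sensibly robust classifier f̃^{s*}_rob has true standard risk R_std(f̃^{s*}_rob) = max(0, 3/4 − 9(4ε² + (2/3)ε)) while its restricted standard risk is 0; in particular as ε grows to α/4 = 1/24 and beyond the true standard risk decreases, reaching 0 for sufficiently large ε. -/
open MeasureTheory Set
open scoped ENNReal Classical

/-- The nine-squares support `X̃ = ∪_{i,j} H_{ij}`, `H_{ij}` of side `α = 1/6`. -/
def nineSquares : Set (ℝ × ℝ) :=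
  ⋃ (i : Fin 3) (j : Fin 3),
    (Set.Ioo ((1:ℝ)/12 + (1/3) * (i : ℕ)) ((3:ℝ)/12 + (1/3) * (i : ℕ))) ×ˢ
      (Set.Ioo ((1:ℝ)/12 + (1/3) * (j : ℕ)) ((3:ℝ)/12 + (1/3) * (j : ℕ)))

/-- The worst-case sensibly robust classifier of Example 2: it agrees with the Bayes rule
`sign(x₁ - 1/2)` on the `ε`-enlargement `B(X̃,ε)` of the nine-squares support, and
predicts the opposite of the Bayes rule outside of it. -/
noncomputable def worstSensiblyRobust (ε : ℝ) (x : ℝ × ℝ) : Bool :=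
  if ∃ x0 ∈ nineSquares, dist x x0 ≤ ε then decide (1/2 < x.1) else !decide (1/2 < x.1)

def tripleU (a : ℝ) : Set ℝ :=
  Ioo (1/12 - a) (3/12 + a) ∪ Ioo (5/12 - a) (7/12 + a) ∪ Ioo (9/12 - a) (11/12 + a)

lemma thick1d_bwd {a b ε t : ℝ} (hε : 0 < ε) (hba : ε < b - a)
    (ht : t ∈ Ioo (a - ε) (b + ε)) : ∃ s ∈ Ioo a b, dist t s ≤ ε := by
  obtain ⟨h1, h2⟩ := ht
  rcases le_or_gt t a with h | h
  · exact ⟨(t + ε + a) / 2, ⟨by linarith, by linarith⟩,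
      by rw [Real.dist_eq, abs_le]; constructor <;> linarith⟩
  rcases le_or_gt b t with h' | h'
  · exact ⟨(t - ε + b) / 2, ⟨by linarith, by linarith⟩,
      by rw [Real.dist_eq, abs_le]; constructor <;> linarith⟩
  · exact ⟨t, ⟨h, h'⟩, by simp [hε.le]⟩

lemma tripleU_fwd {ε t s : ℝ} (hs : s ∈ tripleU 0) (hd : dist t s ≤ ε) : t ∈ tripleU ε := by
  rw [Real.dist_eq, abs_le] at hd
  rcases hs with (⟨h1, h2⟩ | ⟨h1, h2⟩) | ⟨h1, h2⟩
  · exact Or.inl (Or.inl ⟨by linarith, by linarith⟩)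
  · exact Or.inl (Or.inr ⟨by linarith, by linarith⟩)
  · exact Or.inr ⟨by linarith, by linarith⟩

lemma tripleU_bwd {ε t : ℝ} (hε : 0 < ε) (h6 : ε < 1/6) (ht : t ∈ tripleU ε) :
    ∃ s ∈ tripleU 0, dist t s ≤ ε := by
  rcases ht with (h | h) | h
  · obtain ⟨s, hs, hd⟩ := thick1d_bwd hε (by linarith : ε < (3:ℝ)/12 - 1/12) h
    exact ⟨s, Or.inl (Or.inl (by simpa using hs)), hd⟩
  · obtain ⟨s, hs, hd⟩ := thick1d_bwd hε (by linarith : ε < (7:ℝ)/12 - 5/12) h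
    exact ⟨s, Or.inl (Or.inr (by simpa using hs)), hd⟩
  · obtain ⟨s, hs, hd⟩ := thick1d_bwd hε (by linarith : ε < (11:ℝ)/12 - 9/12) h
    exact ⟨s, Or.inr (by simpa using hs), hd⟩

lemma nineSquares_eq : nineSquares = tripleU 0 ×ˢ tripleU 0 := by
  ext x
  simp only [nineSquares, mem_iUnion, mem_prod, tripleU, mem_union, mem_Ioo]
  constructor
  · rintro ⟨i, j, h⟩
    fin_cases i <;> fin_cases j <;> norm_num at h ⊢ <;> tauto
  · rintro ⟨hx, hy⟩
    rcases hx with (hx | hx) | hx <;> rcases hy with (hy | hy) | hy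
    · exact ⟨0, 0, by norm_num at hx hy ⊢ <;> tauto⟩
    · exact ⟨0, 1, by norm_num at hx hy ⊢ <;> tauto⟩
    · exact ⟨0, 2, by norm_num at hx hy ⊢ <;> tauto⟩
    · exact ⟨1, 0, by norm_num at hx hy ⊢ <;> tauto⟩
    · exact ⟨1, 1, by norm_num at hx hy ⊢ <;> tauto⟩
    · exact ⟨1, 2, by norm_num at hx hy ⊢ <;> tauto⟩
    · exact ⟨2, 0, by norm_num at hx hy ⊢ <;> tauto⟩
    · exact ⟨2, 1, by norm_num at hx hy ⊢ <;> tauto⟩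
    · exact ⟨2, 2, by norm_num at hx hy ⊢ <;> tauto⟩

lemma thick_iff {ε : ℝ} (hε : 0 < ε) (h6 : ε < 1/6) (x : ℝ × ℝ) :
    (∃ x0 ∈ nineSquares, dist x x0 ≤ ε) ↔ x ∈ tripleU ε ×ˢ tripleU ε := by
  rw [nineSquares_eq]
  constructor
  · rintro ⟨x0, ⟨h1, h2⟩, hd⟩
    rw [Prod.dist_eq, max_le_iff] at hd
    exact ⟨tripleU_fwd h1 hd.1, tripleU_fwd h2 hd.2⟩
  · rintro ⟨h1, h2⟩
    obtain ⟨s, hs, hds⟩ := tripleU_bwd hε h6 h1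
    obtain ⟨u, hu, hdu⟩ := tripleU_bwd hε h6 h2
    exact ⟨(s, u), ⟨hs, hu⟩, by rw [Prod.dist_eq, max_le_iff]; exact ⟨hds, hdu⟩⟩

lemma tripleU_meas (a : ℝ) : MeasurableSet (tripleU a) :=
  (measurableSet_Ioo.union measurableSet_Ioo).union measurableSet_Ioo

lemma vol_left {ε : ℝ} (hε : 0 < ε) (hε' : ε ≤ 1/24) :
    volume (tripleU ε ∩ Ioo (0:ℝ) (1/2)) = ENNReal.ofReal (1/4 + 3*ε) := by
  have h : tripleU ε ∩ Ioo (0:ℝ) (1/2)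
      = Ioo (1/12 - ε) (3/12 + ε) ∪ Ioo (5/12 - ε) (1/2) := by
    ext t
    simp only [tripleU, mem_inter_iff, mem_union, mem_Ioo]
    constructor
    · rintro ⟨(h | h) | h, h0, h1⟩
      · exact Or.inl h
      · exact Or.inr ⟨h.1, h1⟩
      · exfalso; linarith [h.1]
    · rintro (h | h)
      · exact ⟨Or.inl (Or.inl h), by linarith [h.1], by linarith [h.2]⟩
      · exact ⟨Or.inl (Or.inr ⟨h.1, by linarith [h.2]⟩), by linarith [h.1], h.2⟩
  rw [h, measure_union ?_ measurableSet_Ioo, Real.volume_Ioo, Real.volume_Ioo,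
    ← ENNReal.ofReal_add (by linarith) (by linarith)]
  · congr 1; ring
  · rw [Set.disjoint_left]
    rintro t ⟨_, h2⟩ ⟨h3, _⟩
    linarith

lemma vol_right {ε : ℝ} (hε : 0 < ε) (hε' : ε ≤ 1/24) :
    volume (tripleU ε ∩ Ioo (1/2:ℝ) 1) = ENNReal.ofReal (1/4 + 3*ε) := by
  have h : tripleU ε ∩ Ioo (1/2:ℝ) 1
      = Ioo (1/2:ℝ) (7/12 + ε) ∪ Ioo (9/12 - ε) (11/12 + ε) := by
    ext t
    simp only [tripleU, mem_inter_iff, mem_union, mem_Ioo]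
    constructor
    · rintro ⟨(h | h) | h, h0, h1⟩
      · exfalso; linarith [h.2]
      · exact Or.inl ⟨h0, h.2⟩
      · exact Or.inr h
    · rintro (h | h)
      · exact ⟨Or.inl (Or.inr ⟨by linarith [h.1], h.2⟩), h.1, by linarith [h.2]⟩
      · exact ⟨Or.inr h, by linarith [h.1], by linarith [h.2]⟩
  rw [h, measure_union ?_ measurableSet_Ioo, Real.volume_Ioo, Real.volume_Ioo,
    ← ENNReal.ofReal_add (by linarith) (by linarith)]
  · congr 1; ring
  · rw [Set.disjoint_left]
    rintro t ⟨_, h2⟩ ⟨h3, _⟩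
    linarith

lemma vol_full {ε : ℝ} (hε : 0 < ε) (hε' : ε ≤ 1/24) :
    volume (tripleU ε ∩ Ioo (0:ℝ) 1) = ENNReal.ofReal (1/2 + 6*ε) := by
  have h : tripleU ε ∩ Ioo (0:ℝ) 1 = tripleU ε := by
    apply inter_eq_left.mpr
    rintro t ((h | h) | h) <;>
      exact ⟨by linarith [h.1], by linarith [h.2]⟩
  rw [h]
  unfold tripleU
  rw [measure_union ?_ measurableSet_Ioo, measure_union ?_ measurableSet_Ioo,
    Real.volume_Ioo, Real.volume_Ioo, Real.volume_Ioo,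
    ← ENNReal.ofReal_add (by linarith) (by linarith),
    ← ENNReal.ofReal_add (by linarith) (by linarith)]
  · congr 1; ring
  · rw [Set.disjoint_left]
    rintro t ⟨_, h2⟩ ⟨h3, _⟩
    linarith
  · rw [Set.disjoint_left]
    rintro t ((⟨_, h2⟩ | ⟨_, h2⟩)) ⟨h3, _⟩ <;> linarith

/-- In Example 2 (nine-squares support, `α = 1/6`, `ε ≤ α/4 = 1/24`): the worst-case
sensibly robust classifier has restricted standard risk `0` but true standard risk
`max(0, 3/4 - 9(4ε² + (2/3)ε))`; this quantity is nonincreasing in `ε` and vanishes for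
all sufficiently large `ε`. -/
theorem nineSquares_sensibly_robust_risk (p : ℝ) (hp : 1/2 < p) (hp1 : p ≤ 1)
    (ε : ℝ) (hε : 0 < ε) (hε' : ε ≤ 1/24) :
    uniformExampleMeasure p
        {z : (ℝ × ℝ) × Bool | z.1 ∈ nineSquares ∧ worstSensiblyRobust ε z.1 ≠ z.2} = 0 ∧
    (uniformExampleMeasure p
        {z : (ℝ × ℝ) × Bool | worstSensiblyRobust ε z.1 ≠ z.2}).toReal
      = max 0 (3/4 - 9 * (4 * ε^2 + (2/3) * ε)) ∧
    (∀ e₁ e₂ : ℝ, 0 ≤ e₁ → e₁ ≤ e₂ →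
      max 0 (3/4 - 9 * (4 * e₂^2 + (2/3) * e₂)) ≤
        max 0 (3/4 - 9 * (4 * e₁^2 + (2/3) * e₁))) ∧
    (∃ e₀ : ℝ, ∀ e : ℝ, e₀ ≤ e → max 0 (3/4 - 9 * (4 * e^2 + (2/3) * e)) = 0) := by
  set L : Set (ℝ × ℝ) := Ioo (0:ℝ) (1/2) ×ˢ Ioo (0:ℝ) 1 with hLdef
  set R : Set (ℝ × ℝ) := Ioo (1/2:ℝ) 1 ×ˢ Ioo (0:ℝ) 1 with hRdef
  set B : Set (ℝ × ℝ) := tripleU ε ×ˢ tripleU ε with hBdef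
  have hLmeas : MeasurableSet L := measurableSet_Ioo.prod measurableSet_Ioo
  have hRmeas : MeasurableSet R := measurableSet_Ioo.prod measurableSet_Ioo
  have hBmeas : MeasurableSet B := (tripleU_meas ε).prod (tripleU_meas ε)
  have hm : ∀ x : ℝ × ℝ, (∃ x0 ∈ nineSquares, dist x x0 ≤ ε) ↔ x ∈ B :=
    thick_iff hε (by linarith)
  have hworst : ∀ x : ℝ × ℝ, worstSensiblyRobust ε x
      = if x ∈ B then decide (1/2 < x.1) else !decide (1/2 < x.1) := by
    intro x
    unfold worstSensiblyRobust
    by_cases h : x ∈ B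
    · rw [if_pos ((hm x).mpr h), if_pos h]
    · rw [if_neg (fun c => h ((hm x).mp c)), if_neg h]
  have hexp : ∀ S : Set ((ℝ × ℝ) × Bool), uniformExampleMeasure p S =
      ENNReal.ofReal (1 - p) * (2 * volume ((fun x => (x, false)) ⁻¹' S ∩ L)) +
      ENNReal.ofReal p * (2 * volume ((fun x => (x, true)) ⁻¹' S ∩ R)) := by
    intro S
    unfold uniformExampleMeasure
    rw [Measure.add_apply, Measure.smul_apply, Measure.smul_apply,
      (measurableEmbedding_prod_mk_right false).map_apply,
      (measurableEmbedding_prod_mk_right true).map_apply,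
      Measure.smul_apply, Measure.smul_apply,
      Measure.restrict_apply' hLmeas, Measure.restrict_apply' hRmeas]
    simp [smul_eq_mul]
  -- volumes of L \ B and R \ B
  have hBL : volume (B ∩ L) = ENNReal.ofReal ((1/4 + 3*ε) * (1/2 + 6*ε)) := by
    rw [hBdef, hLdef, Set.prod_inter_prod, Measure.volume_eq_prod, Measure.prod_prod,
      vol_left hε hε', vol_full hε hε', ← ENNReal.ofReal_mul (by linarith)]
  have hBR : volume (B ∩ R) = ENNReal.ofReal ((1/4 + 3*ε) * (1/2 + 6*ε)) := by
    rw [hBdef, hRdef, Set.prod_inter_prod, Measure.volume_eq_prod, Measure.prod_prod,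
      vol_right hε hε', vol_full hε hε', ← ENNReal.ofReal_mul (by linarith)]
  have hq : (0:ℝ) ≤ (1/4 + 3*ε) * (1/2 + 6*ε) := by nlinarith
  have hvolL : volume L = ENNReal.ofReal (1/2) := by
    rw [hLdef, Measure.volume_eq_prod, Measure.prod_prod, Real.volume_Ioo, Real.volume_Ioo]
    norm_num
  have hvolR : volume R = ENNReal.ofReal (1/2) := by
    rw [hRdef, Measure.volume_eq_prod, Measure.prod_prod, Real.volume_Ioo, Real.volume_Ioo]
    norm_num
  have hLB : volume (L \ B) = ENNReal.ofReal (1/2 - (1/4 + 3*ε) * (1/2 + 6*ε)) := by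
    rw [← Set.diff_inter_self_eq_diff,
      measure_diff inter_subset_right ((hBmeas.inter hLmeas).nullMeasurableSet)
        (by rw [hBL]; exact ENNReal.ofReal_ne_top),
      hBL, hvolL, ENNReal.ofReal_sub _ hq]
  have hRB : volume (R \ B) = ENNReal.ofReal (1/2 - (1/4 + 3*ε) * (1/2 + 6*ε)) := by
    rw [← Set.diff_inter_self_eq_diff,
      measure_diff inter_subset_right ((hBmeas.inter hRmeas).nullMeasurableSet)
        (by rw [hBR]; exact ENNReal.ofReal_ne_top),
      hBR, hvolR, ENNReal.ofReal_sub _ hq]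
  refine ⟨?_, ?_, ?_, ?_⟩
  · -- restricted risk is 0
    rw [hexp]
    have h1 : (fun x : ℝ × ℝ => (x, false)) ⁻¹'
        {z : (ℝ × ℝ) × Bool | z.1 ∈ nineSquares ∧ worstSensiblyRobust ε z.1 ≠ z.2} ∩ L
        = ∅ := by
      ext x
      simp only [mem_inter_iff, mem_preimage, mem_setOf_eq, mem_empty_iff_false, iff_false,
        not_and]
      rintro ⟨hNS, hne⟩ hxL
      have hxB : x ∈ B := (hm x).mp ⟨x, hNS, by simp [hε.le]⟩
      apply hne
      rw [hworst x, if_pos hxB]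
      exact decide_eq_false (by have := hxL.1.2; simp at this ⊢; linarith)
    have h2 : (fun x : ℝ × ℝ => (x, true)) ⁻¹'
        {z : (ℝ × ℝ) × Bool | z.1 ∈ nineSquares ∧ worstSensiblyRobust ε z.1 ≠ z.2} ∩ R
        = ∅ := by
      ext x
      simp only [mem_inter_iff, mem_preimage, mem_setOf_eq, mem_empty_iff_false, iff_false,
        not_and]
      rintro ⟨hNS, hne⟩ hxR
      have hxB : x ∈ B := (hm x).mp ⟨x, hNS, by simp [hε.le]⟩
      apply hne
      rw [hworst x, if_pos hxB]
      exact decide_eq_true hxR.1.1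
    rw [h1, h2]
    simp
  · -- true standard risk
    rw [hexp]
    have h1 : (fun x : ℝ × ℝ => (x, false)) ⁻¹'
        {z : (ℝ × ℝ) × Bool | worstSensiblyRobust ε z.1 ≠ z.2} ∩ L = L \ B := by
      ext x
      simp only [mem_inter_iff, mem_preimage, mem_setOf_eq, mem_diff]
      rw [hworst x]
      constructor
      · rintro ⟨hne, hxL⟩
        refine ⟨hxL, fun hB => hne ?_⟩
        rw [if_pos hB]
        exact decide_eq_false (by have := hxL.1.2; simp at this ⊢; linarith)
      · rintro ⟨hxL, hnB⟩
        refine ⟨?_, hxL⟩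
        rw [if_neg hnB, decide_eq_false (show ¬ (1/2 < x.1) by have := hxL.1.2; linarith)]
        simp
    have h2 : (fun x : ℝ × ℝ => (x, true)) ⁻¹'
        {z : (ℝ × ℝ) × Bool | worstSensiblyRobust ε z.1 ≠ z.2} ∩ R = R \ B := by
      ext x
      simp only [mem_inter_iff, mem_preimage, mem_setOf_eq, mem_diff]
      rw [hworst x]
      constructor
      · rintro ⟨hne, hxR⟩
        refine ⟨hxR, fun hB => hne ?_⟩
        rw [if_pos hB]
        exact decide_eq_true hxR.1.1
      · rintro ⟨hxR, hnB⟩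
        refine ⟨?_, hxR⟩
        rw [if_neg hnB, decide_eq_true hxR.1.1]
        simp
    rw [h1, h2, hLB, hRB, ← add_mul, ← ENNReal.ofReal_add (by linarith) (by linarith)]
    norm_num
    have hv0 : (0:ℝ) ≤ 1/2 - (1/4 + 3*ε) * (1/2 + 6*ε) := by nlinarith
    rw [ENNReal.toReal_ofReal hv0, max_eq_right (by nlinarith)]
    ring
  · intro e₁ e₂ h0 h12
    exact max_le_max le_rfl (by nlinarith)
  · exact ⟨1, fun e he => max_eq_left (by nlinarith)⟩
end
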